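/- arXiv:1507.04455 — 7 statements merged into one kernel-verified Lean document; each statement's English description precedes it below -/
import Mathlib

section
/- If E is a symmetric reflection space of an abelian group G, then E + 2⟨E⟩ = E, where ⟨E⟩ is the subgroup of G generated by E. -/
theorem symmetric_reflection_space_add_two_closure {G : Type*} [AddCommGroup G] (E : Set G)
    (hE : ∀ x ∈ E, ∀ y ∈ E, x - 2 • y ∈ E) :
    {g : G | ∃ e ∈ E, ∃ s ∈ AddSubgroup.closure E, g = e + 2 • s} = E := by
  have hneg : ∀ e ∈ E, -e ∈ E := by
    intro e he
    have := hE e he e he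
    have h2 : e - 2 • e = -e := by rw [two_nsmul]; abel
    rwa [h2] at this
  set S : AddSubgroup G :=
    { carrier := {s | ∀ e ∈ E, e + 2 • s ∈ E}
      zero_mem' := by intro e he; simpa using he
      add_mem' := by
        intro a b ha hb e he
        have := hb _ (ha e he)
        have h2 : e + 2 • a + 2 • b = e + 2 • (a + b) := by
          simp [two_nsmul]; abel
        rwa [h2] at this
      neg_mem' := by
        intro a ha e he
        have h1 := ha _ (hneg e he)
        have h2 := hneg _ h1
        have h3 : -(-e + 2 • a) = e + 2 • (-a) := by
          simp [two_nsmul]; abel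
        rwa [h3] at h2 } with hS
  have hES : E ⊆ S := by
    intro y hy e he
    have := hE e he (-y) (hneg y hy)
    have h2 : e - 2 • (-y) = e + 2 • y := by simp [two_nsmul]; abel
    rwa [h2] at this
  have hclos : AddSubgroup.closure E ≤ S := AddSubgroup.closure_le S |>.mpr hES
  ext g
  constructor
  · rintro ⟨e, he, s, hs, rfl⟩
    exact hclos hs e he
  · intro hg
    exact ⟨g, hg, 0, (AddSubgroup.closure E).zero_mem, by simp⟩
end

section
/- Every nonempty reflection space E of ℤ is a coset of a subgroup: for any e ∈ E there exists a nonnegative integer p with E = pℤ + e. -/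
/-!
Translating by `-e` reduces to a reflection space `S ∋ 0`, which is symmetric and stable under
`x ↦ x + 2s` for `s ∈ S`. If `d` is its least positive element, reflecting `0` and `d` through
the translates of `d` gives all of `dℤ`. Conversely, any `x ∈ S` is congruent mod `2d` to some
`r ∈ S` with `0 ≤ r < 2d`; minimality of `d`, applied to `r` and to its reflection `2d - r`,
forces `r ∈ {0, d}`, so `d ∣ x`.
-/

def IsReflectionSpace {G : Type*} [AddCommGroup G] (E : Set G) : Prop :=
  ∀ x ∈ E, ∀ y ∈ E, 2 • x - y ∈ E

namespace IsReflectionSpace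

section AddCommGroup

variable {G : Type*} [AddCommGroup G] {S : Set G}

theorem preimage_add_right {E : Set G} (hE : IsReflectionSpace E) (e : G) :
    IsReflectionSpace ((· + e) ⁻¹' E) := by
  intro a ha b hb
  have h := hE _ ha _ hb
  simp only [Set.mem_preimage] at h ⊢
  convert h using 1
  rw [two_nsmul, two_nsmul]
  abel

variable (hS : IsReflectionSpace S) (h0 : (0 : G) ∈ S)
include hS h0

theorem neg_mem {a : G} (ha : a ∈ S) : -a ∈ S := by
  simpa using hS 0 h0 a ha

theorem add_two_nsmul_mem {a s : G} (ha : a ∈ S) (hs : s ∈ S) : a + 2 • s ∈ S := by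
  simpa [add_comm] using hS s hs (-a) (hS.neg_mem h0 ha)

theorem add_two_mul_zsmul_mem {a s : G} (ha : a ∈ S) (hs : s ∈ S) (k : ℤ) :
    a + (2 * k) • s ∈ S := by
  induction k using Int.induction_on with
  | zero => simpa using ha
  | succ k ih =>
    convert hS.add_two_nsmul_mem h0 ih hs using 1
    rw [mul_add, add_zsmul, two_nsmul]
    abel
  | pred k ih =>
    convert hS.add_two_nsmul_mem h0 ih (hS.neg_mem h0 hs) using 1
    rw [mul_sub, sub_zsmul, two_nsmul]
    abel

theorem zmultiples_subset {d : G} (hd : d ∈ S) : (AddSubgroup.zmultiples d : Set G) ⊆ S := by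
  rintro _ ⟨k, rfl⟩
  obtain ⟨m, rfl | rfl⟩ := Int.even_or_odd' k
  · simpa using hS.add_two_mul_zsmul_mem h0 h0 hd m
  · simpa [add_zsmul, add_comm] using hS.add_two_mul_zsmul_mem h0 hd hd m

end AddCommGroup

section Int

variable {S : Set ℤ} (hS : IsReflectionSpace S) (h0 : (0 : ℤ) ∈ S)
include hS h0

theorem dvd_of_isLeast {d : ℤ} (hd : IsLeast {x | x ∈ S ∧ 0 < x} d) {x : ℤ} (hx : x ∈ S) :
    d ∣ x := by
  obtain ⟨⟨hdS, hd_pos⟩, hmin⟩ := hd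
  set q := x / (2 * d)
  set r := x % (2 * d)
  have hx_eq : x = 2 * d * q + r := (Int.mul_ediv_add_emod x (2 * d)).symm
  have hr : r ∈ S := by
    convert hS.add_two_mul_zsmul_mem h0 hx hdS (-q) using 1
    rw [smul_eq_mul]
    linear_combination -hx_eq
  have hr' : 2 * d - r ∈ S := by simpa using hS d hdS r hr
  have hr_nonneg : 0 ≤ r := Int.emod_nonneg x (by omega)
  have hr_lt : r < 2 * d := Int.emod_lt_of_pos x (by omega)
  have h1 : 0 < r → d ≤ r := fun h => hmin ⟨hr, h⟩
  have h2 : 0 < 2 * d - r → d ≤ 2 * d - r := fun h => hmin ⟨hr', h⟩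
  have hr_cases : r = 0 ∨ r = d := by omega
  rcases hr_cases with h | h <;> rw [hx_eq, h]
  exacts [⟨2 * q, by ring⟩, ⟨2 * q + 1, by ring⟩]

theorem int_exists_eq_zmultiples :
    ∃ p : ℤ, 0 ≤ p ∧ S = AddSubgroup.zmultiples p := by
  by_cases hpos : ∃ x ∈ S, 0 < x
  · obtain ⟨d, hd, hmin⟩ := Int.exists_least_of_bdd ⟨0, fun _ h => h.2.le⟩ hpos
    refine ⟨d, hd.2.le, (hS.zmultiples_subset h0 hd.1).antisymm' fun x hx => ?_⟩
    exact Int.mem_zmultiples_iff.mpr (hS.dvd_of_isLeast h0 ⟨hd, fun _ h => hmin _ h⟩ hx)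
  · refine ⟨0, le_rfl, Set.Subset.antisymm (fun x hx => ?_) (by simpa using h0)⟩
    have := hS.neg_mem h0 hx
    simp only [AddSubgroup.zmultiples_zero_eq_bot, AddSubgroup.coe_bot, Set.mem_singleton_iff]
    push Not at hpos
    linarith [hpos x hx, hpos _ this]

end Int

end IsReflectionSpace

theorem reflection_space_int_coset_general {E : Set ℤ}
    (hE : ∀ x ∈ E, ∀ y ∈ E, 2 • x - y ∈ E) :
    ∀ e ∈ E, ∃ p : ℤ, 0 ≤ p ∧ E = {x : ℤ | ∃ k : ℤ, x = p * k + e} := by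
  intro e he
  have hS : IsReflectionSpace ((· + e) ⁻¹' E) := IsReflectionSpace.preimage_add_right hE e
  obtain ⟨p, hp, hSp⟩ := hS.int_exists_eq_zmultiples (by simpa using he)
  refine ⟨p, hp, Set.ext fun x => ?_⟩
  have hx : x ∈ E ↔ x - e ∈ (· + e) ⁻¹' E := by simp
  rw [hx, hSp, SetLike.mem_coe, Int.mem_zmultiples_iff, Set.mem_ofPred_eq]
  exact ⟨fun ⟨k, hk⟩ => ⟨k, by omega⟩, fun ⟨k, hk⟩ => ⟨k, by omega⟩⟩

theorem reflection_space_int_coset {E : Set ℤ} (hne : E.Nonempty)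
    (hE : ∀ x ∈ E, ∀ y ∈ E, 2 • x - y ∈ E) :
    ∀ e ∈ E, ∃ p : ℤ, 0 ≤ p ∧ E = {x : ℤ | ∃ k : ℤ, x = p * k + e} :=
  reflection_space_int_coset_general hE
end

section
/- Every nonempty symmetric reflection space E of ℤ equals pℤ or p(2ℤ + 1) for some nonnegative integer p. -/
/-! The maps `x ↦ x + 2 • y` (`y ∈ E`) generate translations of `E` by the whole of
`2 • closure E`. In `ℤ` the closure is `dℤ` for some `d ≥ 0`, so `E ⊆ dℤ` is a union of cosets of
`2dℤ`, i.e. of `2dℤ` and `d + 2dℤ`. The coset `d + 2dℤ` must occur, since otherwise `E ⊆ 2dℤ`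
would force `d ∈ 2dℤ` and then both cosets coincide; the remaining choice is whether `0 ∈ E`. -/

theorem Int.exists_nonneg_closure_eq_zmultiples (s : Set ℤ) :
    ∃ d : ℤ, 0 ≤ d ∧ AddSubgroup.closure s = AddSubgroup.zmultiples d := by
  obtain ⟨a, ha⟩ := Int.subgroup_cyclic (AddSubgroup.closure s)
  exact ⟨a.natAbs, Int.natCast_nonneg _,
    by rw [ha, Int.zmultiples_natAbs, AddSubgroup.zmultiples_eq_closure]⟩

theorem Int.dvd_of_mem_of_closure_eq_zmultiples {s : Set ℤ} {d x : ℤ}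
    (hcl : AddSubgroup.closure s = AddSubgroup.zmultiples d) (hx : x ∈ s) : d ∣ x :=
  Int.mem_zmultiples_iff.mp (hcl ▸ AddSubgroup.subset_closure hx)

def IsSymmetricReflectionSpace {G : Type*} [AddCommGroup G] (E : Set G) : Prop :=
  ∀ x ∈ E, ∀ y ∈ E, x - 2 • y ∈ E

namespace IsSymmetricReflectionSpace

section AddCommGroup

variable {G : Type*} [AddCommGroup G] {E : Set G}

theorem neg_mem (hE : IsSymmetricReflectionSpace E) {x : G} (hx : x ∈ E) : -x ∈ E := by
  simpa [two_nsmul] using hE x hx x hx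

theorem add_two_nsmul_mem (hE : IsSymmetricReflectionSpace E) {x y : G} (hx : x ∈ E)
    (hy : y ∈ E) : x + 2 • y ∈ E := by
  simpa using hE x hx (-y) (hE.neg_mem hy)

theorem add_two_nsmul_mem_of_mem_closure (hE : IsSymmetricReflectionSpace E) {x z : G}
    (hx : x ∈ E) (hz : z ∈ AddSubgroup.closure E) : x + 2 • z ∈ E := by
  induction hz using AddSubgroup.closure_induction generalizing x with
  | mem y hy => exact hE.add_two_nsmul_mem hx hy
  | zero => simpa using hx
  | add y z _ _ ihy ihz => simpa [nsmul_add, add_assoc] using ihz (ihy hx)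
  | neg y _ ih => simpa [sub_eq_add_neg, add_comm] using hE.neg_mem (ih (hE.neg_mem hx))

end AddCommGroup

section Int

variable {E : Set ℤ} {d : ℤ}

theorem mem_of_mem_of_two_mul_dvd_sub (hE : IsSymmetricReflectionSpace E)
    (hcl : AddSubgroup.closure E = AddSubgroup.zmultiples d) {x y : ℤ} (hx : x ∈ E)
    (hxy : 2 * d ∣ y - x) : y ∈ E := by
  obtain ⟨k, hk⟩ := hxy
  have hkd : d * k ∈ AddSubgroup.closure E := by
    rw [hcl, Int.mem_zmultiples_iff]
    exact dvd_mul_right d k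
  have hy : y = x + 2 • (d * k) := by rw [two_nsmul]; linarith
  exact hy ▸ hE.add_two_nsmul_mem_of_mem_closure hx hkd

theorem mem_of_closure_eq_zmultiples (hE : IsSymmetricReflectionSpace E) (hne : E.Nonempty)
    (hcl : AddSubgroup.closure E = AddSubgroup.zmultiples d) : d ∈ E := by
  by_contra hd
  have hE_even : E ⊆ AddSubgroup.zmultiples (2 * d) := fun x hx => by
    obtain ⟨m, rfl⟩ := Int.dvd_of_mem_of_closure_eq_zmultiples hcl hx
    obtain ⟨k, rfl | rfl⟩ := Int.even_or_odd' m
    · exact Int.mem_zmultiples_iff.mpr ⟨k, by ring⟩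
    · exact absurd (hE.mem_of_mem_of_two_mul_dvd_sub hcl hx ⟨-k, by ring⟩) hd
  -- `2d ∣ d` makes `d` congruent to every element of `E` modulo `2d`.
  have h2d : 2 * d ∣ d := Int.mem_zmultiples_iff.mp <|
    (AddSubgroup.closure_le _).mpr hE_even (hcl ▸ AddSubgroup.mem_zmultiples d)
  obtain ⟨x, hx⟩ := hne
  exact hd (hE.mem_of_mem_of_two_mul_dvd_sub hcl hx
    (dvd_sub h2d (Int.mem_zmultiples_iff.mp (hE_even hx))))

end Int

end IsSymmetricReflectionSpace

theorem symmetric_reflection_space_int {E : Set ℤ} (hne : E.Nonempty)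
    (hE : ∀ x ∈ E, ∀ y ∈ E, x - 2 • y ∈ E) :
    ∃ p : ℤ, 0 ≤ p ∧ (E = {x : ℤ | p ∣ x} ∨ E = {x : ℤ | ∃ k : ℤ, x = p * (2 * k + 1)}) := by
  have hE : IsSymmetricReflectionSpace E := hE
  obtain ⟨d, hd, hcl⟩ := Int.exists_nonneg_closure_eq_zmultiples E
  have hdE : d ∈ E := hE.mem_of_closure_eq_zmultiples hne hcl
  refine ⟨d, hd, ?_⟩
  by_cases h0 : (0 : ℤ) ∈ E
  · refine .inl (Set.ext fun x => ⟨Int.dvd_of_mem_of_closure_eq_zmultiples hcl, ?_⟩)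
    rintro ⟨m, rfl⟩
    obtain ⟨k, rfl | rfl⟩ := Int.even_or_odd' m
    · exact hE.mem_of_mem_of_two_mul_dvd_sub hcl h0 ⟨k, by ring⟩
    · exact hE.mem_of_mem_of_two_mul_dvd_sub hcl hdE ⟨k, by ring⟩
  · refine .inr (Set.ext fun x => ⟨fun hx => ?_, ?_⟩)
    · obtain ⟨m, rfl⟩ := Int.dvd_of_mem_of_closure_eq_zmultiples hcl hx
      obtain ⟨k, rfl | rfl⟩ := Int.even_or_odd' m
      · exact absurd (hE.mem_of_mem_of_two_mul_dvd_sub hcl hx ⟨-k, by ring⟩) h0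
      · exact ⟨k, rfl⟩
    · rintro ⟨k, rfl⟩
      exact hE.mem_of_mem_of_two_mul_dvd_sub hcl hdE ⟨k, by ring⟩
end

section
/- Every symmetric reflection space E of an abelian group G is a union of cosets of 2⟨E⟩: E = ⋃_{e ∈ E} (2⟨E⟩ + e), i.e., for every e ∈ E, the whole coset 2⟨E⟩ + e is contained in E. -/
/-! A symmetric reflection space is closed under negation (`x - 2 • x = -x`), hence also under
`e ↦ e + 2 • x` for `x ∈ E`. The `s` for which `e ↦ e + 2 • s` maps `E` into itself then form
a subgroup containing `E`, so they include all of `⟨E⟩`. -/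

section ReflectionSpace

variable {G : Type*} [AddCommGroup G] {E : Set G}

theorem neg_mem_of_sub_two_nsmul_mem (hE : ∀ x ∈ E, ∀ y ∈ E, x - 2 • y ∈ E) {x : G}
    (hx : x ∈ E) : -x ∈ E := by
  simpa [two_nsmul] using hE x hx x hx

def doubleTranslationSubgroup (hneg : ∀ x ∈ E, -x ∈ E) : AddSubgroup G where
  carrier := {s | ∀ e ∈ E, e + 2 • s ∈ E}
  zero_mem' e he := by simpa using he
  add_mem' {s t} hs ht e he := by
    simpa [smul_add, add_assoc] using ht _ (hs e he)
  neg_mem' {s} hs e he := by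
    -- e - 2 • s = -((-e) + 2 • s)
    simpa [smul_neg, sub_eq_add_neg, add_comm] using hneg _ (hs _ (hneg e he))

theorem closure_le_doubleTranslationSubgroup (hE : ∀ x ∈ E, ∀ y ∈ E, x - 2 • y ∈ E) :
    AddSubgroup.closure E ≤ doubleTranslationSubgroup (fun _ => neg_mem_of_sub_two_nsmul_mem hE) :=
  AddSubgroup.closure_le _ |>.mpr fun x hx e he => by
    simpa [smul_neg, sub_eq_add_neg] using hE e he _ (neg_mem_of_sub_two_nsmul_mem hE hx)

theorem add_two_nsmul_mem_of_mem_closure (hE : ∀ x ∈ E, ∀ y ∈ E, x - 2 • y ∈ E) {e s : G}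
    (he : e ∈ E) (hs : s ∈ AddSubgroup.closure E) : e + 2 • s ∈ E :=
  closure_le_doubleTranslationSubgroup hE hs e he

end ReflectionSpace

theorem symmetric_reflection_space_union_cosets {G : Type*} [AddCommGroup G] (E : Set G)
    (hE : ∀ x ∈ E, ∀ y ∈ E, x - 2 • y ∈ E) :
    E = ⋃ e ∈ E, {g : G | ∃ s ∈ AddSubgroup.closure E, g = 2 • s + e} := by
  ext g
  simp only [Set.mem_iUnion, Set.mem_ofPred_eq, exists_prop]
  constructor
  · intro hg
    exact ⟨g, hg, 0, zero_mem _, by simp⟩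
  · rintro ⟨e, he, s, hs, rfl⟩
    rw [add_comm]
    exact add_two_nsmul_mem_of_mem_closure hE he hs
end

section
/- For any two elements x, y of an abelian group G, the reflection space generated by {x, y} equals ⟨y - x⟩ + x, the coset of the cyclic subgroup generated by y - x shifted by x. -/
/-- The reflection space generated by a subset `A`: the smallest subset of `G`
containing `A` closed under `(a, b) ↦ 2a - b`. -/
def reflGen {G : Type*} [AddCommGroup G] (A : Set G) : Set G :=
  ⋂₀ {B : Set G | A ⊆ B ∧ ∀ a ∈ B, ∀ b ∈ B, 2 • a - b ∈ B}

/-!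
Reflecting the point `x + (m + 1) • d` in `x + m • d` and vice versa steps along the progression
`x + ℤ • d` in both directions, so a reflection-closed set containing `x` and `y = x + d`
contains the whole coset `x + ⟨d⟩`. Conversely `2 • (x + m • d) - (x + n • d) = x + (2m - n) • d`,
so that coset is itself reflection-closed.
-/

def IsReflClosed {G : Type*} [AddCommGroup G] (B : Set G) : Prop :=
  ∀ a ∈ B, ∀ b ∈ B, 2 • a - b ∈ B

namespace IsReflClosed

variable {G : Type*} [AddCommGroup G] {B : Set G}

theorem zsmul_add_mem_of_consecutive (hB : IsReflClosed B) {d x : G}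
    (h₀ : x ∈ B) (h₁ : d + x ∈ B) (m : ℤ) : m • d + x ∈ B ∧ (m + 1) • d + x ∈ B := by
  induction m using Int.induction_on with
  | zero => simpa using And.intro h₀ h₁
  | succ k ih =>
    refine ⟨ih.2, ?_⟩
    have step : 2 • (((k : ℤ) + 1) • d + x) - ((k : ℤ) • d + x) = ((k : ℤ) + 1 + 1) • d + x := by
      simp only [two_nsmul, add_zsmul, one_zsmul]; abel
    simpa only [step] using hB _ ih.2 _ ih.1
  | pred k ih =>
    have step : 2 • ((-(k : ℤ)) • d + x) - ((-(k : ℤ) + 1) • d + x) = (-(k : ℤ) - 1) • d + x := by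
      simp only [two_nsmul, add_zsmul, sub_zsmul, one_zsmul]; abel
    refine ⟨step ▸ hB _ ih.1 _ ih.2, ?_⟩
    simpa using ih.1

theorem zsmul_add_mem (hB : IsReflClosed B) {d x : G} (h₀ : x ∈ B) (h₁ : d + x ∈ B) (m : ℤ) :
    m • d + x ∈ B :=
  (hB.zsmul_add_mem_of_consecutive h₀ h₁ m).1

end IsReflClosed

section reflGen

variable {G : Type*} [AddCommGroup G]

theorem subset_reflGen_of_forall {A B : Set G}
    (h : ∀ C, A ⊆ C → IsReflClosed C → B ⊆ C) : B ⊆ reflGen A :=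
  Set.subset_sInter fun C hC => h C hC.1 hC.2

theorem reflGen_subset {A B : Set G} (hAB : A ⊆ B) (hB : IsReflClosed B) : reflGen A ⊆ B :=
  Set.sInter_subset_of_mem ⟨hAB, hB⟩

theorem isReflClosed_zsmul_add (d x : G) : IsReflClosed {g : G | ∃ m : ℤ, g = m • d + x} := by
  rintro _ ⟨m, rfl⟩ _ ⟨n, rfl⟩
  exact ⟨2 * m - n, by simp only [two_nsmul, sub_zsmul, mul_zsmul, two_zsmul]; abel⟩

end reflGen

theorem reflGen_pair {G : Type*} [AddCommGroup G] (x y : G) :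
    reflGen {x, y} = {g : G | ∃ m : ℤ, g = m • (y - x) + x} := by
  apply Set.Subset.antisymm
  · refine reflGen_subset ?_ (isReflClosed_zsmul_add _ _)
    rintro g (rfl | rfl)
    exacts [⟨0, by simp⟩, ⟨1, by simp⟩]
  · refine subset_reflGen_of_forall fun B hAB hB => ?_
    rintro _ ⟨m, rfl⟩
    exact hB.zsmul_add_mem (hAB (.inl rfl)) (by simpa using hAB (.inr rfl)) m
end

section
/- For any two elements x, y of an abelian group G, the symmetric reflection space generated by {x, y} equals ⟨x - y⟩ + ⟨x + y⟩ + x, i.e., {m(x - y) + n(x + y) + x : m, n ∈ ℤ}. -/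
/-- The symmetric reflection space generated by a subset `A`: the smallest subset of `G`
containing `A` closed under `(a, b) ↦ a - 2b`. -/
def symReflGen {G : Type*} [AddCommGroup G] (A : Set G) : Set G :=
  ⋂₀ {B : Set G | A ⊆ B ∧ ∀ a ∈ B, ∀ b ∈ B, a - 2 • b ∈ B}

/-!
Since `a - 2 • (-b) = a + 2 • b` and `a - 2 • a = -a`, the space `[A⟩` is stable under translation
by `2 • b` for every `b ∈ [A⟩`, hence by `2 • h` for every `h` in the subgroup generated by `A`.
Conversely the set `A + 2 • ⟨A⟩` is closed under `(a, b) ↦ a - 2b`, so `[A⟩ = A + 2 • ⟨A⟩`.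
For `A = {x, y}` it remains to sort `m • (x - y) + n • (x + y) + x` by the parity of `m + n`.
-/

open Pointwise

namespace symReflGen

variable {G : Type*} [AddCommGroup G] {A B : Set G} {a b : G}

theorem subset_self : A ⊆ symReflGen A :=
  fun _ ha _ hB ↦ hB.1 ha

theorem sub_two_smul_mem (ha : a ∈ symReflGen A) (hb : b ∈ symReflGen A) :
    a - 2 • b ∈ symReflGen A :=
  fun B hB ↦ hB.2 a (ha B hB) b (hb B hB)

theorem subset_of_closed (hAB : A ⊆ B) (hB : ∀ a ∈ B, ∀ b ∈ B, a - 2 • b ∈ B) :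
    symReflGen A ⊆ B :=
  Set.sInter_subset_of_mem ⟨hAB, hB⟩

theorem neg_mem (ha : a ∈ symReflGen A) : -a ∈ symReflGen A := by
  simpa [two_smul] using sub_two_smul_mem ha ha

theorem two_smul_mem_stabilizer (hb : b ∈ symReflGen A) :
    2 • b ∈ AddAction.stabilizer G (symReflGen A) := by
  rw [AddAction.mem_stabilizer_iff]
  refine Set.Subset.antisymm ?_ fun a ha ↦ ?_
  · rintro _ ⟨a, ha, rfl⟩
    simpa [vadd_eq_add, add_comm] using sub_two_smul_mem ha (neg_mem hb)
  · exact ⟨a - 2 • b, sub_two_smul_mem ha hb, by simp [vadd_eq_add]⟩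

theorem add_two_smul_mem {h : G} (ha : a ∈ symReflGen A) (hh : h ∈ AddSubgroup.closure A) :
    a + 2 • h ∈ symReflGen A := by
  have hle : AddSubgroup.closure A ≤
      (AddAction.stabilizer G (symReflGen A)).comap (nsmulAddMonoidHom 2) :=
    (AddSubgroup.closure_le _).2 fun b hb ↦ two_smul_mem_stabilizer (subset_self hb)
  have hstab := AddAction.mem_stabilizer_iff.1 (hle hh)
  rw [nsmulAddMonoidHom_apply] at hstab
  rw [add_comm, ← vadd_eq_add, ← hstab]
  exact Set.vadd_mem_vadd_set ha

theorem eq_add_two_smul_closure :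
    symReflGen A = {g | ∃ a ∈ A, ∃ h ∈ AddSubgroup.closure A, g = a + 2 • h} := by
  refine Set.Subset.antisymm (subset_of_closed (fun a ha ↦ ⟨a, ha, 0, zero_mem _, by simp⟩) ?_) ?_
  · rintro _ ⟨a, ha, h, hh, rfl⟩ _ ⟨a', ha', h', hh', rfl⟩
    refine ⟨a, ha, h - a' - 2 • h', ?_, by module⟩
    exact sub_mem (sub_mem hh (AddSubgroup.subset_closure ha')) (nsmul_mem hh' 2)
  · rintro _ ⟨a, ha, h, hh, rfl⟩
    exact add_two_smul_mem (subset_self ha) hh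

end symReflGen

theorem symReflGen_pair {G : Type*} [AddCommGroup G] (x y : G) :
    symReflGen {x, y} = {g : G | ∃ m n : ℤ, g = m • (x - y) + n • (x + y) + x} := by
  simp only [symReflGen.eq_add_two_smul_closure, AddSubgroup.mem_closure_pair]
  ext g
  constructor
  · rintro ⟨a, rfl | rfl, _, ⟨i, j, rfl⟩, rfl⟩
    · exact ⟨i - j, i + j, by module⟩
    · exact ⟨i - j - 1, i + j, by module⟩
  · rintro ⟨m, n, rfl⟩
    obtain ⟨p, hp | hp⟩ := Int.even_or_odd' (m + n)
    · exact ⟨x, .inl rfl, _, ⟨p, p - m, rfl⟩, by rw [show n = 2 * p - m by omega]; module⟩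
    · exact ⟨y, .inr rfl, _, ⟨p + 1, p - m, rfl⟩, by rw [show n = 2 * p + 1 - m by omega]; module⟩
end

section
/- For any two elements x, y of an abelian group G, the symmetric reflection space generated by {x, y} equals (2⟨x, y⟩ + x) ∪ (2⟨x, y⟩ + y), where ⟨x, y⟩ is the subgroup generated by x and y. -/
section

variable {G : Type*} [AddCommGroup G] {A : Set G}

theorem subset_symReflGen : A ⊆ symReflGen A :=
  fun _ hv _ hB ↦ hB.1 hv

theorem sub_two_nsmul_mem_symReflGen {a b : G} (ha : a ∈ symReflGen A)
    (hb : b ∈ symReflGen A) : a - 2 • b ∈ symReflGen A :=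
  fun B hB ↦ hB.2 a (ha B hB) b (hb B hB)

theorem symReflGen_subset {B : Set G} (hAB : A ⊆ B) (hB : ∀ a ∈ B, ∀ b ∈ B, a - 2 • b ∈ B) :
    symReflGen A ⊆ B :=
  Set.sInter_subset_of_mem ⟨hAB, hB⟩

theorem neg_mem_symReflGen {t : G} (ht : t ∈ symReflGen A) : -t ∈ symReflGen A := by
  simpa [two_nsmul] using sub_two_nsmul_mem_symReflGen ht ht

theorem add_two_nsmul_mem_symReflGen {s t : G} (hs : s ∈ AddSubgroup.closure A)
    (ht : t ∈ symReflGen A) : t + 2 • s ∈ symReflGen A := by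
  induction hs using AddSubgroup.closure_induction generalizing t with
  | mem v hv =>
    simpa using sub_two_nsmul_mem_symReflGen ht (neg_mem_symReflGen (subset_symReflGen hv))
  | zero => simpa using ht
  | add a b _ _ ha hb =>
    simpa [smul_add, add_assoc] using hb (ha ht)
  | neg a _ ha =>
    simpa [smul_neg, add_comm] using neg_mem_symReflGen (ha (neg_mem_symReflGen ht))

theorem coset_subset_symReflGen (a : G) (ha : a ∈ A) :
    {g : G | ∃ s ∈ AddSubgroup.closure A, g = 2 • s + a} ⊆ symReflGen A := by
  rintro _ ⟨s, hs, rfl⟩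
  rw [add_comm]
  exact add_two_nsmul_mem_symReflGen hs (subset_symReflGen ha)

theorem symReflGen_eq_biUnion_cosets (A : Set G) :
    symReflGen A = ⋃ a ∈ A, {g : G | ∃ s ∈ AddSubgroup.closure A, g = 2 • s + a} := by
  refine (symReflGen_subset ?_ ?_).antisymm (Set.iUnion₂_subset coset_subset_symReflGen)
  · intro a ha
    exact Set.mem_biUnion ha ⟨0, zero_mem _, by simp⟩
  · simp only [Set.mem_iUnion, Set.mem_ofPred_eq]
    rintro _ ⟨a, ha, s, hs, rfl⟩ _ ⟨b, hb, t, ht, rfl⟩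
    refine ⟨a, ha, s - 2 • t - b, ?_, by abel⟩
    exact sub_mem (sub_mem hs (nsmul_mem ht 2)) (AddSubgroup.subset_closure hb)

end

theorem symReflGen_pair_cosets {G : Type*} [AddCommGroup G] (x y : G) :
    symReflGen {x, y} =
      {g : G | ∃ s ∈ AddSubgroup.closure ({x, y} : Set G), g = 2 • s + x} ∪
        {g : G | ∃ s ∈ AddSubgroup.closure ({x, y} : Set G), g = 2 • s + y} := by
  rw [symReflGen_eq_biUnion_cosets, Set.biUnion_insert, Set.biUnion_singleton]
end
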